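/- Validity of the empirical bounds (Proposition 2): for every bounded phi in Q-cal and every state-action pair (s,a), the values Q-hat^L_0(s,a) and Q-hat^U_0(s,a) of the inner DPs computed with the sampled (empirical) penalties satisfy E[ Q-hat^L_0(s,a) ] <= Q*(s,a) <= E[ Q-hat^U_0(s,a) ]. -/

import Mathlib

open MeasureTheory ProbabilityTheory Filter

namespace LBQL

noncomputable section

variable {S A W : Type*}

/-- The state-action trajectory generated by the transition function `f`, a deterministic
Markov policy `π`, the initial state-action pair `sa`, and the disturbance sequence `w`
(with the convention that `w t` plays the role of `w_{t+1}`, i.e.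
`s_{t+1} = f (s_t, a_t, w t)` and `a_{t+1} = π (s_{t+1})`). -/
def traj (f : S → A → W → S) (π : S → A) (sa : S × A) (w : ℕ → W) : ℕ → S × A
  | 0 => sa
  | t + 1 =>
      (f (traj f π sa w t).1 (traj f π sa w t).2 (w t),
        π (f (traj f π sa w t).1 (traj f π sa w t).2 (w t)))

/-- The discounted infinite-horizon action-value `Q^π(s,a)` of the deterministic Markov
policy `π`, defined as the expectation, over an i.i.d. disturbance sequence `wseq` on the
probability space `(Ω, μ)`, of the total discounted reward. -/
def Qpol {Ω : Type*} [MeasurableSpace Ω] (μ : Measure Ω) (wseq : ℕ → Ω → W)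
    (γ : ℝ) (r : S → A → ℝ) (f : S → A → W → S) (π : S → A) (s : S) (a : A) : ℝ :=
  ∫ ω, ∑' t, γ ^ t *
      r (traj f π (s, a) (fun i => wseq i ω) t).1
        (traj f π (s, a) (fun i => wseq i ω) t).2 ∂μ

/-- The optimal action-value function `Q*(s,a) = max_π Q^π(s,a)`. -/
def Qopt {Ω : Type*} [MeasurableSpace Ω] (μ : Measure Ω) (wseq : ℕ → Ω → W)
    (γ : ℝ) (r : S → A → ℝ) (f : S → A → W → S) (s : S) (a : A) : ℝ :=
  ⨆ π : S → A, Qpol μ wseq γ r f π s a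

/-- Transition function of the absorption-time (absorbing-chain) formulation: the state
space is augmented with an absorbing state (`none`); the disturbance is a pair of a
Bernoulli "survival" coin and an original disturbance, and the chain is killed (absorbed)
whenever the coin is `false`. -/
def habs (f : S → A → W → S) : Option S → A → Bool × W → Option S
  | some s, a, d => if d.1 then some (f s a d.2) else none
  | none, _, _ => none

/-- Reward of the absorbing chain: `0` at the absorbing state. -/
def rbar (r : S → A → ℝ) : Option S → A → ℝ
  | some s, a => r s a
  | none, _ => 0

/-- Extension of a function on `S × A` to the augmented state space, by `0` at the
absorbing state (the class `Q-cal`). -/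
def ext0 (Q : S → A → ℝ) : Option S → A → ℝ
  | some s, a => Q s a
  | none, _ => 0

/-- Extension of a deterministic Markov policy to the augmented state space. -/
def extPolicy [Nonempty A] (π : S → A) : Option S → A
  | some s => π s
  | none => Classical.arbitrary A

/-- The absorption time of a realized disturbance path of the absorbing chain: the first
time at which the chain is absorbed (equivalently, the first `n` such that one of the
survival coins among `d 0, …, d (n-1)` has failed). -/
def absTime (d : ℕ → Bool × W) : ℕ := sInf {n | ∃ i < n, (d i).1 = false}

/-- A canonical greedy policy for an action-value function `φ`. -/
def greedy {S' : Type*} [Fintype A] [Nonempty A] (φ : S' → A → ℝ) (s : S') : A :=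
  Classical.choose (Finite.exists_max (φ s))

/-- The upper-bound inner dynamic program: `innerU h g w t m s a` is the (perfect
information relaxation) value at time `t` with `m` periods remaining, per-period reward
`g` (reward minus penalty), realized disturbance path `w` and transition function `h`;
the terminal value is `0` and the continuation is maximized over actions. -/
def innerU {S' D : Type*} [Fintype A] [Nonempty A] (h : S' → A → D → S')
    (g : ℕ → S' → A → ℝ) (w : ℕ → D) : ℕ → ℕ → S' → A → ℝ
  | _, 0, _, _ => 0
  | t, m + 1, s, a => g t s a + ⨆ a' : A, innerU h g w (t + 1) m (h s a (w t)) a'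

/-- The lower-bound inner dynamic program: as `innerU`, but the continuation action is
chosen by the policy `π`. -/
def innerL {S' D : Type*} (h : S' → A → D → S') (π : S' → A)
    (g : ℕ → S' → A → ℝ) (w : ℕ → D) : ℕ → ℕ → S' → A → ℝ
  | _, 0, _, _ => 0
  | t, m + 1, s, a =>
      g t s a + innerL h π g w (t + 1) m (h s a (w t)) (π (h s a (w t)))

/-- The empirical (batch) penalty `ζ-hat_t^π(s, a, w_{t+1} | φ)`, where the conditional
expectation is estimated by the sample average over a batch of `K` disturbances. -/
def penB (f : S → A → W → S) (K : ℕ) (φ : Option S → A → ℝ) (π : Option S → A)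
    (path : ℕ → Bool × W) (batch : ℕ → Option S → A → Fin K → Bool × W)
    (t : ℕ) (s : Option S) (a : A) : ℝ :=
  φ (habs f s a (path t)) (π (habs f s a (path t))) -
    (K : ℝ)⁻¹ * ∑ k : Fin K,
      φ (habs f s a (batch t s a k)) (π (habs f s a (batch t s a k)))

/-- The exact penalty `ζ_t^π(s, a, w_{t+1} | φ)`, where the expectation is taken with
respect to the distribution `νa` of the absorbing-chain disturbance. -/
def penE [MeasurableSpace W] (f : S → A → W → S) (νa : Measure (Bool × W))
    (φ : Option S → A → ℝ) (π : Option S → A) (path : ℕ → Bool × W)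
    (t : ℕ) (s : Option S) (a : A) : ℝ :=
  φ (habs f s a (path t)) (π (habs f s a (path t))) -
    ∫ d, φ (habs f s a d) (π (habs f s a d)) ∂νa

/-- The experience-replay penalty `ζ-tilde_t^π(s, a, w_{t+1} | φ)`: the expectation is
taken with the `W`-component distributed according to `phat` and an independent
Bernoulli(γ) survival coin. -/
def penR [Fintype W] (f : S → A → W → S) (γ : ℝ) (phat : W → ℝ)
    (φ : Option S → A → ℝ) (π : Option S → A) (path : ℕ → Bool × W)
    (t : ℕ) (s : Option S) (a : A) : ℝ :=
  φ (habs f s a (path t)) (π (habs f s a (path t))) -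
    ∑ x : W, phat x *
      (γ * φ (habs f s a (true, x)) (π (habs f s a (true, x))) +
        (1 - γ) * φ (habs f s a (false, x)) (π (habs f s a (false, x))))

/-- Empirical distribution of the first `n+1` observed disturbances `wn 0, …, wn n`. -/
def empDist [DecidableEq W] (wn : ℕ → W) (n : ℕ) (x : W) : ℝ :=
  (((Finset.range (n + 1)).filter fun i => wn i = x).card : ℝ) / (n + 1)

/-- Finite geometric sum `∑_{i=0}^{m-1} γ^i`. -/
def Gsum (γ : ℝ) (m : ℕ) : ℝ := ∑ i ∈ Finset.range m, γ ^ i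

/-- A realization of the LBQL algorithm: the visited states `sn`, chosen actions `an`,
observed disturbances `wn`, stepsizes, iterates `Q, Q', L, U`, the inner sample paths
`path n` (of realized length `tau n`), the greedy policies `pol n` for `φ = Q_{n+1}` and
the realized penalty values `pen n` (common to the upper- and lower-bound inner
problems), together with the LBQL update equations. -/
structure Run [Fintype A] [Nonempty A]
    (f : S → A → W → S) (r : S → A → ℝ) (γ ρ : ℝ) where
  sn : ℕ → S
  an : ℕ → A
  wn : ℕ → W
  alpha : ℕ → S → A → ℝ
  beta : ℕ → S → A → ℝ
  Q : ℕ → S → A → ℝ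
  Q' : ℕ → S → A → ℝ
  L : ℕ → S → A → ℝ
  U : ℕ → S → A → ℝ
  path : ℕ → ℕ → Bool × W
  tau : ℕ → ℕ
  pol : ℕ → Option S → A
  pen : ℕ → ℕ → Option S → A → ℝ
  hs : ∀ n, sn (n + 1) = f (sn n) (an n) (wn n)
  halpha : ∀ n s a, 0 ≤ alpha n s a ∧ alpha n s a ≤ 1
  hbeta : ∀ n s a, 0 ≤ beta n s a ∧ beta n s a ≤ 1
  htau : ∀ n, tau n = absTime (path n)
  hpol : ∀ n s' a', ext0 (Q (n + 1)) s' a' ≤ ext0 (Q (n + 1)) s' (pol n s')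
  hQ'0 : ∀ s a, Q' 0 s a = Q 0 s a
  hQon : ∀ n, Q (n + 1) (sn n) (an n) = Q' n (sn n) (an n) + alpha n (sn n) (an n) *
      (r (sn n) (an n) + γ * (⨆ a' : A, Q' n (sn (n + 1)) a') - Q' n (sn n) (an n))
  hQoff : ∀ n s a, ¬(s = sn n ∧ a = an n) → Q (n + 1) s a = Q' n s a
  hUon : ∀ n, U (n + 1) (sn n) (an n) = max (-ρ) (U n (sn n) (an n) +
      beta n (sn n) (an n) *
        (innerU (habs f) (fun t s' a' => rbar r s' a' - pen n t s' a') (path n) 0 (tau n)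
            (some (sn n)) (an n) -
          U n (sn n) (an n)))
  hUoff : ∀ n s a, ¬(s = sn n ∧ a = an n) → U (n + 1) s a = U n s a
  hLon : ∀ n, L (n + 1) (sn n) (an n) = min ρ (L n (sn n) (an n) +
      beta n (sn n) (an n) *
        (innerL (habs f) (pol n) (fun t s' a' => rbar r s' a' - pen n t s' a') (path n) 0
            (tau n) (some (sn n)) (an n) -
          L n (sn n) (an n)))
  hLoff : ∀ n s a, ¬(s = sn n ∧ a = an n) → L (n + 1) s a = L n s a
  hQ'on : ∀ n, Q' (n + 1) (sn n) (an n) = max (L (n + 1) (sn n) (an n))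
      (min (U (n + 1) (sn n) (an n)) (Q (n + 1) (sn n) (an n)))
  hQ'off : ∀ n s a, ¬(s = sn n ∧ a = an n) → Q' (n + 1) s a = Q (n + 1) s a


/-- Index type for the noise random variables of the idealized LBQL algorithm: the
observed disturbances (indexed by the iteration `n`), the inner sample-path disturbances
(indexed by `(n, t)`), and the batch disturbances (indexed by
`(n, t, s, a, k)`, a fresh batch at each evaluation of the penalty). -/
abbrev NzIdx (S' A' : Type*) (K : ℕ) : Type _ :=
  ℕ ⊕ ((ℕ × ℕ) ⊕ (ℕ × ℕ × Option S' × A' × Fin K))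

/-- Codomain of each noise variable: `W` for the observed disturbances, `Bool × W`
(survival coin together with a disturbance) for the absorbing-chain disturbances. -/
def NzTy (W' : Type*) {S' A' : Type*} {K : ℕ} : NzIdx S' A' K → Type _
  | .inl _ => W'
  | .inr _ => Bool × W'

/-- The measurable-space structure on the codomain of each noise variable. -/
def nzms (W' : Type*) [MeasurableSpace W'] {S' A' : Type*} {K : ℕ} :
    ∀ j : NzIdx S' A' K, MeasurableSpace (NzTy W' j)
  | .inl _ => (inferInstance : MeasurableSpace W')
  | .inr _ => (inferInstance : MeasurableSpace (Bool × W'))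

/-- The family of noise random variables, assembled from the observed disturbances `wn`,
the inner sample paths `path` and the batches `batch`. -/
def nzfun {Ω W' S' A' : Type*} {K : ℕ} (wn : ℕ → Ω → W')
    (path : ℕ → ℕ → Ω → Bool × W')
    (batch : ℕ → ℕ → Option S' → A' → Fin K → Ω → Bool × W') :
    ∀ j : NzIdx S' A' K, Ω → NzTy W' j
  | .inl n => wn n
  | .inr (.inl (n, t)) => path n t
  | .inr (.inr (n, t, s, a, k)) => batch n t s a k

/-- The iteration (stage) at which a given noise variable is used. -/
def nzStage {S' A' : Type*} {K : ℕ} : NzIdx S' A' K → ℕ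
  | .inl n => n
  | .inr (.inl (n, _)) => n
  | .inr (.inr (n, _, _, _, _)) => n

/-- Index type for the noise of the LBQL algorithm with exact penalties (no batches). -/
abbrev NzIdxE : Type := ℕ ⊕ (ℕ × ℕ)

def NzTyE (W' : Type*) : NzIdxE → Type _
  | .inl _ => W'
  | .inr _ => Bool × W'

def nzmsE (W' : Type*) [MeasurableSpace W'] : ∀ j : NzIdxE, MeasurableSpace (NzTyE W' j)
  | .inl _ => (inferInstance : MeasurableSpace W')
  | .inr _ => (inferInstance : MeasurableSpace (Bool × W'))

def nzfunE {Ω W' : Type*} (wn : ℕ → Ω → W') (path : ℕ → ℕ → Ω → Bool × W') :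
    ∀ j : NzIdxE, Ω → NzTyE W' j
  | .inl n => wn n
  | .inr (n, t) => path n t

def nzStageE : NzIdxE → ℕ
  | .inl n => n
  | .inr (n, _) => n

/-- Index type for the noise of the experience-replay LBQL algorithm: observed
disturbances, the survival coins of the inner sample paths, and the uniformly random
buffer indices used to draw the inner sample paths from the replay buffer. -/
abbrev NzIdxR : Type := ℕ ⊕ ((ℕ × ℕ) ⊕ (ℕ × ℕ))

def NzTyR (W' : Type) : NzIdxR → Type
  | .inl _ => W'
  | .inr (.inl _) => Bool
  | .inr (.inr _) => ℕ

def nzmsR (W' : Type) [MeasurableSpace W'] : ∀ j : NzIdxR, MeasurableSpace (NzTyR W' j)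
  | .inl _ => (inferInstance : MeasurableSpace W')
  | .inr (.inl _) => (inferInstance : MeasurableSpace Bool)
  | .inr (.inr _) => (inferInstance : MeasurableSpace ℕ)

def nzfunR {Ω : Type*} {W' : Type} (wn : ℕ → Ω → W') (coin : ℕ → ℕ → Ω → Bool)
    (idx : ℕ → ℕ → Ω → ℕ) : ∀ j : NzIdxR, Ω → NzTyR W' j
  | .inl n => wn n
  | .inr (.inl (n, t)) => coin n t
  | .inr (.inr (n, t)) => idx n t

def nzStageR : NzIdxR → ℕ
  | .inl n => n
  | .inr (.inl (n, _)) => n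
  | .inr (.inr (n, _)) => n

/-- `LbarGen γ M Ut n` is the lower envelope
`min { Ut (n-1) (1+γ), …, Ut 1 (1+γ+⋯+γ^{n-1}), -M (1+γ+⋯+γ^n) }`. -/
def LbarGen (γ M : ℝ) (Ut : ℕ → ℝ) (n : ℕ) : ℝ :=
  (insert 0 (Finset.Ico 1 n)).inf' (Finset.insert_nonempty _ _)
    (fun j => if j = 0 then -M * Gsum γ (n + 1) else Ut j * Gsum γ (n - j + 1))

/-- `UbarGen γ M Lt n` is the upper envelope
`max { Lt (n-1) (1+γ), …, Lt 1 (1+γ+⋯+γ^{n-1}), M (1+γ+⋯+γ^n) }`. -/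
def UbarGen (γ M : ℝ) (Lt : ℕ → ℝ) (n : ℕ) : ℝ :=
  (insert 0 (Finset.Ico 1 n)).sup' (Finset.insert_nonempty _ _)
    (fun j => if j = 0 then M * Gsum γ (n + 1) else Lt j * Gsum γ (n - j + 1))

/-- As `LbarGen`, additionally including the term `Ut n` (note `Gsum γ 1 = 1`). -/
def Lbar'Gen (γ M : ℝ) (Ut : ℕ → ℝ) (n : ℕ) : ℝ :=
  (insert 0 (Finset.Icc 1 n)).inf' (Finset.insert_nonempty _ _)
    (fun j => if j = 0 then -M * Gsum γ (n + 1) else Ut j * Gsum γ (n - j + 1))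

/-- As `UbarGen`, additionally including the term `Lt n`. -/
def Ubar'Gen (γ M : ℝ) (Lt : ℕ → ℝ) (n : ℕ) : ℝ :=
  (insert 0 (Finset.Icc 1 n)).sup' (Finset.insert_nonempty _ _)
    (fun j => if j = 0 then M * Gsum γ (n + 1) else Lt j * Gsum γ (n - j + 1))

end

end LBQL

open LBQL

/-!
Unrolled along the trajectory of a policy `π`, the lower inner DP is the sum of the penalized
rewards collected before absorption. Each empirical penalty has mean zero at every
state-action pair, and the disturbance and batch used at time `i` are independent of the
state-action pair reached at time `i`, so the penalties drop out in expectation. The chain is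
still alive at time `i` with probability `γ ^ i`, which turns the undiscounted rewards of the
absorbing chain into the discounted rewards of the original one: `E[Q̂^L] = Q^π ≤ Q*`. The
upper DP maximizes over actions, so it dominates the lower DP of every policy `π`, whence
`E[Q̂^U] ≥ Q^π` for all `π`, i.e. `E[Q̂^U] ≥ Q*`.
-/

section Probability

variable {Ω : Type*}

theorem extend_val_apply {V : Type*} {n : ℕ} (z : Fin n → V) (e : ℕ → V) {i : ℕ}
    (hi : i < n) : Function.extend Fin.val z e i = z ⟨i, hi⟩ :=
  Fin.val_injective.extend_apply z e ⟨i, hi⟩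

theorem measurable_iSup_comap_of_mem {ι β : Type*} [MeasurableSpace β] (X : ι → Ω → β)
    {s : Set ι} {j : ι} (hj : j ∈ s) :
    Measurable[⨆ j ∈ s, MeasurableSpace.comap (X j) inferInstance] (X j) :=
  measurable_iff_comap_le.2 (le_iSup₂ (f := fun j (_ : j ∈ s) =>
    MeasurableSpace.comap (X j) inferInstance) j hj)

variable [MeasurableSpace Ω] {μ : Measure Ω}

theorem measurable_apply_of_countable {β γ : Type*} [MeasurableSpace β] [Countable β]
    [MeasurableSingletonClass β] [MeasurableSpace γ] {F : β → Ω → γ}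
    (hF : ∀ b, Measurable (F b)) {X : Ω → β} (hX : Measurable X) :
    Measurable fun ω => F (X ω) ω :=
  (measurable_from_prod_countable_left (f := fun p : Ω × β => F p.2 p.1) hF).comp
    (measurable_id.prodMk hX)

theorem integrable_apply_of_abs_le_mul {F : ℕ → Ω → ℝ} (hF : ∀ n, Measurable (F n))
    {τ : Ω → ℕ} (hτ : Measurable τ) (hτi : Integrable (fun ω => (τ ω : ℝ)) μ) {B : ℝ}
    (hB : ∀ n ω, |F n ω| ≤ n * B) :
    Integrable (fun ω => F (τ ω) ω) μ :=
  (hτi.mul_const B).mono' (measurable_apply_of_countable hF hτ).aestronglyMeasurable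
    (ae_of_all _ fun _ => hB _ _)

theorem ProbabilityTheory.iIndepFun.indepFun_of_measurable_iSup {ι β γ δ : Type*}
    [MeasurableSpace β] [MeasurableSpace γ] [MeasurableSpace δ] {X : ι → Ω → β}
    (hX : ∀ j, Measurable (X j)) (hind : iIndepFun X μ) {s t : Set ι} (hst : Disjoint s t)
    {Y : Ω → γ} {Z : Ω → δ}
    (hY : Measurable[⨆ j ∈ s, MeasurableSpace.comap (X j) inferInstance] Y)
    (hZ : Measurable[⨆ j ∈ t, MeasurableSpace.comap (X j) inferInstance] Z) :
    IndepFun Y Z μ := by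
  rw [IndepFun_iff_Indep]
  exact indep_of_indep_of_le_right (indep_of_indep_of_le_left
    (indep_iSup_of_disjoint (fun j => (hX j).comap_le) hind hst) hY.comap_le) hZ.comap_le

theorem ProbabilityTheory.IndepFun.integral_comp_eq_integral_integral [IsFiniteMeasure μ]
    {β δ : Type*} [MeasurableSpace β] [Finite β] [MeasurableSingletonClass β]
    [MeasurableSpace δ] [Finite δ] [MeasurableSingletonClass δ]
    {X : Ω → β} {Y : Ω → δ} (hX : Measurable X) (hY : Measurable Y) (hXY : IndepFun X Y μ)
    (F : β → δ → ℝ) :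
    ∫ ω, F (X ω) (Y ω) ∂μ = ∫ ω, ∫ ω', F (X ω) (Y ω') ∂μ ∂μ := by
  have hmap := (indepFun_iff_map_prod_eq_prod_map_map hX.aemeasurable hY.aemeasurable).1 hXY
  calc ∫ ω, F (X ω) (Y ω) ∂μ = ∫ p, F p.1 p.2 ∂(μ.map fun ω => (X ω, Y ω)) :=
        (integral_map (f := fun p => F p.1 p.2) (hX.prodMk hY).aemeasurable
          (measurable_of_finite _).aestronglyMeasurable).symm
    _ = ∫ x, ∫ y, F x y ∂(μ.map Y) ∂(μ.map X) := by
        rw [hmap, integral_prod _ Integrable.of_finite]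
    _ = ∫ ω, ∫ ω', F (X ω) (Y ω') ∂μ ∂μ := by
        rw [integral_map hX.aemeasurable (measurable_of_finite _).aestronglyMeasurable]
        simp_rw [integral_map hY.aemeasurable (measurable_of_finite _).aestronglyMeasurable]

theorem ProbabilityTheory.iIndepFun.integral_comp_eq_sum [IsProbabilityMeasure μ] {V : Type*}
    [Fintype V] [MeasurableSpace V] [MeasurableSingletonClass V] {X : ℕ → Ω → V}
    (hX : ∀ j, Measurable (X j)) (hind : iIndepFun X μ) {κ : Measure V}
    (hκ : ∀ j, μ.map (X j) = κ) (n : ℕ) (v₀ : V) {G : (ℕ → V) → ℝ}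
    (hG : ∀ z z', (∀ j < n, z j = z' j) → G z = G z') :
    ∫ ω, G (fun j => X j ω) ∂μ =
      ∑ z : Fin n → V, (∏ j, κ.real {z j}) * G (Function.extend Fin.val z fun _ => v₀) := by
  have : IsProbabilityMeasure κ := hκ 0 ▸ Measure.isProbabilityMeasure_map (hX 0).aemeasurable
  set Xn : Ω → Fin n → V := fun ω j => X j ω
  have hXn : Measurable Xn := measurable_pi_lambda _ fun j => hX j
  have hlaw : μ.map Xn = Measure.pi fun _ => κ := by
    rw [(iIndepFun_iff_map_fun_eq_pi_map (f := fun j : Fin n => X j)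
      fun j => (hX j).aemeasurable).1 (hind.precomp Fin.val_injective)]
    simp only [hκ]
  calc ∫ ω, G (fun j => X j ω) ∂μ
      = ∫ ω, G (Function.extend Fin.val (Xn ω) fun _ => v₀) ∂μ := by
        congr 1; ext ω
        exact hG _ _ fun j hj => (extend_val_apply (Xn ω) _ hj).symm
    _ = ∑ z : Fin n → V, (μ.map Xn).real {z} * G (Function.extend Fin.val z fun _ => v₀) := by
        rw [← integral_map (f := fun z => G (Function.extend Fin.val z fun _ => v₀))
            hXn.aemeasurable (measurable_of_finite _).aestronglyMeasurable,
          integral_fintype Integrable.of_finite]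
        rfl
    _ = _ := by
        simp only [hlaw, measureReal_def, ← Set.univ_pi_singleton, Measure.pi_pi,
          ENNReal.toReal_prod]

end Probability

namespace LBQL

section InnerDP

variable {S A W : Type*}

theorem traj_congr (f : S → A → W → S) (π : S → A) (sa : S × A) {w w' : ℕ → W} {i : ℕ}
    (h : ∀ t < i, w t = w' t) : traj f π sa w i = traj f π sa w' i := by
  induction i with
  | zero => rfl
  | succ i ih => simp only [traj, ih fun t ht => h t (by omega), h i (by omega)]

theorem traj_succ' (f : S → A → W → S) (π : S → A) (sa : S × A) (w : ℕ → W) (i : ℕ) :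
    traj f π sa w (i + 1) =
      traj f π (f sa.1 sa.2 (w 0), π (f sa.1 sa.2 (w 0))) (fun j => w (j + 1)) i := by
  induction i with
  | zero => rfl
  | succ i ih => rw [traj, ih]; rfl

theorem innerL_eq_sum_traj {D : Type*} (h : S → A → D → S) (π : S → A)
    (g : ℕ → S → A → ℝ) (w : ℕ → D) (m : ℕ) :
    ∀ t s a, innerL h π g w t m s a = ∑ i ∈ Finset.range m,
      g (t + i) (traj h π (s, a) (fun j => w (t + j)) i).1
        (traj h π (s, a) (fun j => w (t + j)) i).2 := by
  induction m with
  | zero => simp [innerL]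
  | succ m ih =>
    intro t s a
    rw [innerL, ih, Finset.sum_range_succ']
    simp only [traj_succ', add_zero, add_comm, ← add_assoc]
    rfl

theorem innerL_le_innerU [Fintype A] [Nonempty A] {D : Type*} (h : S → A → D → S)
    (π : S → A) (g : ℕ → S → A → ℝ) (w : ℕ → D) (m : ℕ) :
    ∀ t s a, innerL h π g w t m s a ≤ innerU h g w t m s a := by
  induction m with
  | zero => simp [innerL, innerU]
  | succ m ih =>
    intro t s a
    exact add_le_add_right ((ih _ _ _).trans (le_ciSup (Set.finite_range _).bddAbove _)) _

theorem abs_innerL_le {D : Type*} (h : S → A → D → S) (π : S → A) (g : ℕ → S → A → ℝ)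
    (w : ℕ → D) {B : ℝ} (hg : ∀ t s a, |g t s a| ≤ B) (m : ℕ) :
    ∀ t s a, |innerL h π g w t m s a| ≤ m * B := by
  induction m with
  | zero => simp [innerL]
  | succ m ih =>
    intro t s a
    rw [innerL, Nat.cast_succ, add_one_mul, add_comm _ B]
    exact (abs_add_le _ _).trans (add_le_add (hg _ _ _) (ih _ _ _))

theorem abs_innerU_le [Fintype A] [Nonempty A] {D : Type*} (h : S → A → D → S)
    (g : ℕ → S → A → ℝ) (w : ℕ → D) {B : ℝ} (hg : ∀ t s a, |g t s a| ≤ B) (m : ℕ) :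
    ∀ t s a, |innerU h g w t m s a| ≤ m * B := by
  induction m with
  | zero => simp [innerU]
  | succ m ih =>
    intro t s a
    have hsup : |⨆ a', innerU h g w (t + 1) m (h s a (w t)) a'| ≤ m * B :=
      abs_le.2 ⟨(abs_le.1 (ih _ _ (Classical.arbitrary A))).1.trans
          (le_ciSup (Set.finite_range _).bddAbove _),
        ciSup_le fun a' => (abs_le.1 (ih _ _ a')).2⟩
    rw [innerU, Nat.cast_succ, add_one_mul, add_comm _ B]
    exact (abs_add_le _ _).trans (add_le_add (hg _ _ _) hsup)

end InnerDP

section Absorption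

variable {S A W : Type*}

theorem habs_of_fst_eq_false (f : S → A → W → S) (s : Option S) (a : A) {d : Bool × W}
    (hd : d.1 = false) : habs f s a d = none := by
  cases s <;> simp [habs, hd]

theorem traj_habs_of_forall_true (f : S → A → W → S) (π : Option S → A) (s : S) (a : A)
    {d : ℕ → Bool × W} {i : ℕ} (hd : ∀ j < i, (d j).1 = true) :
    traj (habs f) π (some s, a) d i =
      Prod.map some id (traj f (fun s' => π (some s')) (s, a) (fun j => (d j).2) i) := by
  induction i with
  | zero => rfl
  | succ i ih => simp [traj, ih fun j hj => hd j (by omega), habs, hd i (by omega)]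

theorem traj_habs_fst_eq_none (f : S → A → W → S) (π : Option S → A) (sa : Option S × A)
    {d : ℕ → Bool × W} {i : ℕ} (hd : ∃ j < i, (d j).1 = false) :
    (traj (habs f) π sa d i).1 = none := by
  induction i with
  | zero => simp at hd
  | succ i ih =>
    obtain ⟨j, hj, hdj⟩ := hd
    rcases Nat.lt_succ_iff_lt_or_eq.1 hj with hj | rfl
    · simp [traj, ih ⟨j, hj, hdj⟩, habs]
    · exact habs_of_fst_eq_false f _ _ hdj

theorem rbar_traj_habs (f : S → A → W → S) (π : Option S → A) (ρ : S → A → ℝ) (s : S)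
    (a : A) (d : ℕ → Bool × W) (i : ℕ) [Decidable (∀ j < i, (d j).1 = true)] :
    rbar ρ (traj (habs f) π (some s, a) d i).1 (traj (habs f) π (some s, a) d i).2 =
      if ∀ j < i, (d j).1 = true then
        ρ (traj f (fun s' => π (some s')) (s, a) (fun j => (d j).2) i).1
          (traj f (fun s' => π (some s')) (s, a) (fun j => (d j).2) i).2
      else 0 := by
  split_ifs with hd
  · rw [traj_habs_of_forall_true f π s a hd]; rfl
  · push Not at hd
    obtain ⟨j, hj, hdj⟩ := hd
    rw [traj_habs_fst_eq_none f π _ ⟨j, hj, by simpa using hdj⟩]; rfl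

theorem forall_true_of_lt_absTime {d : ℕ → Bool × W} {n : ℕ} (hn : n < absTime d) :
    ∀ j < n, (d j).1 = true := by
  simpa using Nat.notMem_of_lt_sInf hn

theorem absTime_le_iff {d : ℕ → Bool × W} (hd : ∃ j, (d j).1 = false) {n : ℕ} :
    absTime d ≤ n ↔ ∃ j < n, (d j).1 = false := by
  obtain ⟨j₀, hj₀⟩ := hd
  refine ⟨fun h => ?_, fun h => Nat.sInf_le h⟩
  obtain ⟨j, hj, hdj⟩ : absTime d ∈ {n | ∃ j < n, (d j).1 = false} :=
    Nat.sInf_mem ⟨j₀ + 1, j₀, by omega, hj₀⟩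
  exact ⟨j, by omega, hdj⟩

theorem innerL_absTime_eq_tsum (f : S → A → W → S) (π : Option S → A)
    (g : ℕ → Option S → A → ℝ) (hg : ∀ t a, g t none a = 0) (sa : Option S × A)
    {d : ℕ → Bool × W} (hd : ∃ j, (d j).1 = false) :
    innerL (habs f) π g d 0 (absTime d) sa.1 sa.2 =
      ∑' i, g i (traj (habs f) π sa d i).1 (traj (habs f) π sa d i).2 := by
  rw [innerL_eq_sum_traj, tsum_eq_sum (s := Finset.range (absTime d)) fun i hi => ?_]
  · simp
  · rw [Finset.mem_range, not_lt, absTime_le_iff hd] at hi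
    rw [traj_habs_fst_eq_none f π sa hi, hg]

end Absorption

section Measurability

variable {Ω S A D : Type*} [MeasurableSpace S] [Countable S] [MeasurableSingletonClass S]
  [MeasurableSpace D] [Countable D] [MeasurableSingletonClass D]

theorem measurable_traj [MeasurableSpace A] [Countable A] [MeasurableSingletonClass A]
    {m : MeasurableSpace Ω} (h : S → A → D → S) (π : S → A) (sa : S × A) {w : ℕ → Ω → D}
    {i : ℕ} (hw : ∀ t < i, Measurable[m] (w t)) :
    Measurable[m] fun ω => traj h π sa (fun t => w t ω) i := by
  induction i with
  | zero => exact measurable_const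
  | succ i ih =>
    exact (measurable_of_countable fun p : (S × A) × D =>
        (h p.1.1 p.1.2 p.2, π (h p.1.1 p.1.2 p.2))).comp
      ((ih fun t ht => hw t (by omega)).prodMk (hw i (by omega)))

variable [MeasurableSpace Ω] {h : S → A → D → S} {g : Ω → ℕ → S → A → ℝ} {w : ℕ → Ω → D}

theorem measurable_innerU [Fintype A] [Nonempty A]
    (hg : ∀ t s a, Measurable fun ω => g ω t s a) (hw : ∀ t, Measurable (w t)) (m : ℕ) :
    ∀ t s a, Measurable fun ω => innerU h (g ω) (fun t => w t ω) t m s a := by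
  induction m with
  | zero => intros; exact measurable_const
  | succ m ih =>
    intro t s a
    exact (hg t s a).add (Measurable.iSup fun a' => measurable_apply_of_countable
      (fun s' => ih (t + 1) s' a') ((measurable_of_countable (h s a)).comp (hw t)))

theorem measurable_innerL (π : S → A) (hg : ∀ t s a, Measurable fun ω => g ω t s a)
    (hw : ∀ t, Measurable (w t)) (m : ℕ) :
    ∀ t s a, Measurable fun ω => innerL h π (g ω) (fun t => w t ω) t m s a := by
  induction m with
  | zero => intros; exact measurable_const
  | succ m ih =>
    intro t s a
    exact (hg t s a).add (measurable_apply_of_countable (F := fun s' ω =>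
        innerL h π (g ω) (fun t => w t ω) (t + 1) m s' (π s'))
      (fun s' => ih (t + 1) s' (π s')) ((measurable_of_countable (h s a)).comp (hw t)))

end Measurability

section Survival

open scoped ENNReal

variable {Ω Ω₀ W : Type*} [MeasurableSpace Ω] {μ : Measure Ω}

theorem ae_exists_fst_eq_false {X : ℕ → Ω → Bool × W} {q : ℝ≥0∞} (hq : q < 1)
    (hsurv : ∀ n, μ {ω | ∀ j < n, (X j ω).1 = true} = q ^ n) :
    ∀ᵐ ω ∂μ, ∃ j, (X j ω).1 = false := by
  have hle : ∀ n, μ {ω | ∀ j, (X j ω).1 = true} ≤ q ^ n := fun n =>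
    (hsurv n).symm ▸ measure_mono fun ω hω j _ => hω j
  have hnull := nonpos_iff_eq_zero.1
    (ge_of_tendsto' (ENNReal.tendsto_pow_atTop_nhds_zero_of_lt_one hq) hle)
  filter_upwards [measure_eq_zero_iff_ae_notMem.1 hnull] with ω hω
  simpa using hω

variable [MeasurableSpace W]

theorem measurable_absTime {X : ℕ → Ω → Bool × W} (hX : ∀ j, Measurable (X j)) :
    Measurable fun ω => absTime fun j => X j ω := by
  refine measurable_of_Iic fun n => ?_
  have hset : (fun ω => absTime fun j => X j ω) ⁻¹' Set.Iic n =
      {ω | ∃ j < n, (X j ω).1 = false} ∪ {ω | ∀ j, (X j ω).1 = true} := by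
    ext ω
    by_cases hω : ∃ j, (X j ω).1 = false
    · simp [absTime_le_iff hω, hω]
    · push Not at hω
      simp [absTime, hω]
  have hcoin : ∀ j b, MeasurableSet {ω | (X j ω).1 = b} := fun j b =>
    (measurable_fst.comp (hX j)) (measurableSet_singleton b)
  rw [hset, Set.ofPred_forall, Set.ofPred_exists]
  exact (MeasurableSet.iUnion fun j => (MeasurableSet.const (j < n)).inter (hcoin j false)).union
    (MeasurableSet.iInter fun j => hcoin j true)

theorem integrable_absTime {X : ℕ → Ω → Bool × W} (hX : ∀ j, Measurable (X j)) {q : ℝ≥0∞}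
    (hq : q < 1) (hsurv : ∀ n, μ {ω | ∀ j < n, (X j ω).1 = true} = q ^ n) :
    Integrable (fun ω => ((absTime fun j => X j ω : ℕ) : ℝ)) μ := by
  set τ := fun ω => absTime fun j => X j ω
  have hτ : Measurable τ := measurable_absTime hX
  have hlt : ∀ n, MeasurableSet {ω | n < τ ω} := fun n => hτ measurableSet_Ioi
  have hcount : ∀ ω, ‖(τ ω : ℝ)‖ₑ = ∑' n, {ω | n < τ ω}.indicator 1 ω := by
    intro ω
    rw [tsum_eq_sum (s := Finset.range (τ ω)) fun n hn => by simpa using hn,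
      Finset.sum_congr rfl fun n hn =>
        Set.indicator_of_mem (show ω ∈ {ω | n < τ ω} from Finset.mem_range.1 hn) _]
    simp
  refine ⟨((measurable_of_countable fun n : ℕ => (n : ℝ)).comp hτ).aestronglyMeasurable, ?_⟩
  calc ∫⁻ ω, ‖(τ ω : ℝ)‖ₑ ∂μ = ∑' n, μ {ω | n < τ ω} := by
        simp_rw [hcount]
        rw [lintegral_tsum fun n => (measurable_one.indicator (hlt n)).aemeasurable]
        simp_rw [lintegral_indicator_one (hlt _)]
    _ ≤ ∑' n, q ^ n := ENNReal.tsum_le_tsum fun n =>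
        (hsurv n).symm ▸ measure_mono fun ω hω => forall_true_of_lt_absTime hω
    _ < ⊤ := by rw [ENNReal.tsum_geometric]; exact ENNReal.inv_lt_top.2 (tsub_pos_of_lt hq)

theorem measure_fst_eq_true [Fintype W] [MeasurableSingletonClass W] {ν : Measure W}
    [IsProbabilityMeasure ν] {νa : Measure (Bool × W)} {p : ℝ≥0∞}
    (hνa : ∀ x, νa {(true, x)} = p * ν {x}) :
    νa {d | d.1 = true} = p := by
  classical
  have hset : {d : Bool × W | d.1 = true} =
      ((Finset.univ.image fun x => (true, x) : Finset (Bool × W)) : Set (Bool × W)) := by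
    ext ⟨b, x⟩; cases b <;> simp
  rw [hset, ← sum_measure_singleton, Finset.sum_image fun _ _ _ _ h => (Prod.ext_iff.1 h).2]
  simp only [hνa, ← Finset.mul_sum, sum_measure_singleton, Finset.coe_univ, measure_univ,
    mul_one]

theorem measure_forall_fst_eq_true {X : ℕ → Ω → Bool × W} (hX : ∀ j, Measurable (X j))
    (hind : iIndepFun X μ) {νa : Measure (Bool × W)} (hdist : ∀ j, μ.map (X j) = νa) (n : ℕ) :
    μ {ω | ∀ j < n, (X j ω).1 = true} = νa {d | d.1 = true} ^ n := by
  have hC : MeasurableSet {d : Bool × W | d.1 = true} :=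
    measurable_fst (measurableSet_singleton true)
  have hset : {ω | ∀ j < n, (X j ω).1 = true} =
      ⋂ j ∈ Finset.range n, X j ⁻¹' {d | d.1 = true} := by
    ext ω; simp
  rw [hset, hind.measure_inter_preimage_eq_mul _ fun _ _ => hC]
  simp_rw [← Measure.map_apply (hX _) hC, hdist, Finset.prod_const, Finset.card_range]

/-- Only the tuples of disturbances whose survival coins all come up `true` contribute, and
each of their coordinates carries the weight `νa {(true, x)} = γ ν {x}`. -/
theorem integral_ite_forall_fst_eq_true [IsProbabilityMeasure μ] [MeasurableSpace Ω₀]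
    {μ₀ : Measure Ω₀} [IsProbabilityMeasure μ₀] [Fintype W] [Nonempty W]
    [MeasurableSingletonClass W] {X : ℕ → Ω → Bool × W} (hX : ∀ j, Measurable (X j))
    (hXind : iIndepFun X μ) {νa : Measure (Bool × W)} (hXdist : ∀ j, μ.map (X j) = νa)
    {Y : ℕ → Ω₀ → W} (hY : ∀ j, Measurable (Y j)) (hYind : iIndepFun Y μ₀) {ν : Measure W}
    (hYdist : ∀ j, μ₀.map (Y j) = ν) {γ : ℝ} (hγ : 0 ≤ γ)
    (hνa : ∀ x, νa {(true, x)} = ENNReal.ofReal γ * ν {x}) (n : ℕ) {G : (ℕ → W) → ℝ}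
    (hG : ∀ z z', (∀ j < n, z j = z' j) → G z = G z') :
    ∫ ω, (if ∀ j < n, (X j ω).1 = true then G (fun j => (X j ω).2) else 0) ∂μ =
      γ ^ n * ∫ ω, G (fun j => Y j ω) ∂μ₀ := by
  classical
  set w₀ : W := Classical.arbitrary W
  set H : (ℕ → Bool × W) → ℝ := fun d =>
    if ∀ j < n, (d j).1 = true then G (fun j => (d j).2) else 0
  have hH : ∀ d d', (∀ j < n, d j = d' j) → H d = H d' := by
    intro d d' hdd'
    have hc : (∀ j < n, (d j).1 = true) ↔ ∀ j < n, (d' j).1 = true :=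
      forall₂_congr fun j hj => by rw [hdd' j hj]
    simp only [H, hc, hG (fun j => (d j).2) (fun j => (d' j).2) fun j hj => by rw [hdd' j hj]]
  have hreal : ∀ x, νa.real {(true, x)} = γ * ν.real {x} := fun x => by
    rw [measureReal_def, hνa, ENNReal.toReal_mul, ENNReal.toReal_ofReal hγ, measureReal_def]
  rw [hXind.integral_comp_eq_sum hX hXdist n (true, w₀) (G := H) hH,
    hYind.integral_comp_eq_sum hY hYdist n w₀ hG, Finset.mul_sum]
  symm
  refine Fintype.sum_of_injective (fun x j => (true, x j)) ?_ _ _ ?_ fun x => ?_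
  · exact fun x y h => funext fun j => (Prod.ext_iff.1 (congr_fun h j)).2
  · intro z hz
    obtain ⟨j, hj⟩ : ∃ j, (z j).1 = false := by
      by_contra! h
      have htrue : ∀ j, (z j).1 = true := fun j => by simpa using h j
      exact hz ⟨fun j => (z j).2, funext fun j => Prod.ext (htrue j).symm rfl⟩
    have hfail : ¬∀ i < n, ((Function.extend Fin.val z fun _ => (true, w₀)) i).1 = true :=
      fun h => by simpa [extend_val_apply z _ j.2, hj] using h j j.2
    simp [H, hfail]
  · have hc : ∀ i < n,
        ((Function.extend Fin.val (fun j => (true, x j)) fun _ => (true, w₀)) i).1 = true :=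
      fun i hi => by rw [extend_val_apply _ _ hi]
    simp only [H, if_pos hc, hreal, Finset.prod_mul_distrib, Finset.prod_const,
      Finset.card_univ, Fintype.card_fin]
    rw [hG (fun i => ((Function.extend Fin.val (fun j => (true, x j)) fun _ => (true, w₀)) i).2)
      (Function.extend Fin.val x fun _ => w₀)
      fun i hi => by rw [extend_val_apply _ _ hi, extend_val_apply _ _ hi]]
    ring

theorem integral_rbar_traj_habs {S A : Type*} [IsProbabilityMeasure μ] [MeasurableSpace Ω₀]
    {μ₀ : Measure Ω₀} [IsProbabilityMeasure μ₀] [Fintype W] [Nonempty W]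
    [MeasurableSingletonClass W] {X : ℕ → Ω → Bool × W} (hX : ∀ j, Measurable (X j))
    (hXind : iIndepFun X μ) {νa : Measure (Bool × W)} (hXdist : ∀ j, μ.map (X j) = νa)
    {wseq : ℕ → Ω₀ → W} (hwseqmeas : ∀ t, Measurable (wseq t)) (hwseqindep : iIndepFun wseq μ₀)
    {ν : Measure W} (hwseqdist : ∀ t, μ₀.map (wseq t) = ν) {γ : ℝ} (hγ : 0 ≤ γ)
    (hνa : ∀ x, νa {(true, x)} = ENNReal.ofReal γ * ν {x}) (f : S → A → W → S)
    (ρ : S → A → ℝ) (π : Option S → A) (s : S) (a : A) (i : ℕ) :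
    ∫ ω, rbar ρ (traj (habs f) π (some s, a) (fun j => X j ω) i).1
        (traj (habs f) π (some s, a) (fun j => X j ω) i).2 ∂μ =
      γ ^ i * ∫ ω, ρ (traj f (fun s' => π (some s')) (s, a) (fun j => wseq j ω) i).1
        (traj f (fun s' => π (some s')) (s, a) (fun j => wseq j ω) i).2 ∂μ₀ := by
  classical
  simp_rw [rbar_traj_habs]
  exact integral_ite_forall_fst_eq_true hX hXind hXdist hwseqmeas hwseqindep hwseqdist hγ hνa i
    (G := fun d => ρ (traj f _ (s, a) d i).1 (traj f _ (s, a) d i).2)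
    fun z z' h => by simp only [traj_congr f _ _ h]

end Survival

theorem Qpol_eq_tsum {S A W Ω₀ : Type*} [Fintype S] [Fintype A] [MeasurableSpace W]
    [Countable W] [MeasurableSingletonClass W] [MeasurableSpace Ω₀] {μ₀ : Measure Ω₀}
    [IsProbabilityMeasure μ₀] {wseq : ℕ → Ω₀ → W} (hwseqmeas : ∀ t, Measurable (wseq t))
    {γ : ℝ} (hγ0 : 0 ≤ γ) (hγ1 : γ < 1) (r : S → A → ℝ) (f : S → A → W → S) (π : S → A)
    (s : S) (a : A) :
    Qpol μ₀ wseq γ r f π s a = ∑' t, γ ^ t *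
      ∫ ω, r (traj f π (s, a) (fun j => wseq j ω) t).1 (traj f π (s, a) (fun j => wseq j ω) t).2
        ∂μ₀ := by
  let _ : MeasurableSpace S := ⊤
  let _ : MeasurableSpace A := ⊤
  obtain ⟨R, hR⟩ := Finite.exists_le fun p : S × A => |r p.1 p.2|
  set F : ℕ → Ω₀ → ℝ := fun t ω => γ ^ t *
    r (traj f π (s, a) (fun j => wseq j ω) t).1 (traj f π (s, a) (fun j => wseq j ω) t).2
  have hF : ∀ t ω, ‖F t ω‖ ≤ γ ^ t * R := fun t ω => by
    rw [Real.norm_eq_abs, abs_mul, abs_of_nonneg (by positivity)]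
    exact mul_le_mul_of_nonneg_left (hR _) (by positivity)
  have hint : ∀ t, Integrable (F t) μ₀ := fun t =>
    Integrable.of_bound (((measurable_of_countable fun p : S × A => r p.1 p.2).comp
      (measurable_traj f π (s, a) fun j _ => hwseqmeas j)).const_mul _).aestronglyMeasurable
      _ (ae_of_all _ (hF t))
  rw [Qpol, ← integral_tsum_of_summable_integral_norm hint]
  · simp_rw [F, integral_const_mul]
  · refine Summable.of_nonneg_of_le (fun t => integral_nonneg fun ω => norm_nonneg _)
      (fun t => ?_) ((summable_geometric_of_lt_one hγ0 hγ1).mul_right R)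
    simpa using integral_mono (hint t).norm (integrable_const _) (hF t)

section EmpiricalPenalty

variable {S A W Ω : Type*} {K : ℕ}

noncomputable def samplePath (FF : (ℕ ⊕ (ℕ × Option S × A × Fin K)) → Ω → Bool × W)
    (ω : Ω) : ℕ → Bool × W :=
  fun i => FF (.inl i) ω

/-- The per-period reward `r - ζ̂` of both inner dynamic programs. -/
noncomputable def penalizedReward (f : S → A → W → S) (r : S → A → ℝ) (K : ℕ)
    (φ : Option S → A → ℝ) (πφ : Option S → A)
    (FF : (ℕ ⊕ (ℕ × Option S × A × Fin K)) → Ω → Bool × W) (ω : Ω) : ℕ → Option S → A → ℝ :=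
  fun t s' a' => rbar r s' a' - penB f K φ πφ (samplePath FF ω)
    (fun u s'' a'' k => FF (.inr (u, s'', a'', k)) ω) t s' a'

variable {f : S → A → W → S} {r : S → A → ℝ} {φ : Option S → A → ℝ} {πφ : Option S → A}
  {FF : (ℕ ⊕ (ℕ × Option S × A × Fin K)) → Ω → Bool × W}

theorem penB_none (hK : 0 < K) (path : ℕ → Bool × W)
    (batch : ℕ → Option S → A → Fin K → Bool × W) (t : ℕ) (a : A) :
    penB f K φ πφ path batch t none a = 0 := by
  simp only [penB, habs, Finset.sum_const, Finset.card_univ, Fintype.card_fin, nsmul_eq_mul]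
  field_simp
  ring

theorem abs_penB_le (hK : 0 < K) {C : ℝ} (hφ : ∀ s a, |φ s a| ≤ C) (path : ℕ → Bool × W)
    (batch : ℕ → Option S → A → Fin K → Bool × W) (t : ℕ) (s : Option S) (a : A) :
    |penB f K φ πφ path batch t s a| ≤ 2 * C := by
  have hmean : |(K : ℝ)⁻¹ *
      ∑ k, φ (habs f s a (batch t s a k)) (πφ (habs f s a (batch t s a k)))| ≤ C := by
    rw [abs_mul, abs_of_pos (by positivity), inv_mul_le_iff₀ (by positivity)]
    refine (Finset.abs_sum_le_sum_abs _ _).trans ?_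
    simpa using Finset.sum_le_sum (s := Finset.univ) fun (k : Fin K) _ =>
      hφ (habs f s a (batch t s a k)) (πφ (habs f s a (batch t s a k)))
  exact (abs_sub _ _).trans (by linarith [hφ (habs f s a (path t)) (πφ (habs f s a (path t)))])

theorem penalizedReward_none (hK : 0 < K) (ω : Ω) (t : ℕ) (a : A) :
    penalizedReward f r K φ πφ FF ω t none a = 0 := by
  simp [penalizedReward, rbar, penB_none hK]

theorem exists_abs_penalizedReward_le [Fintype S] [Fintype A] (hK : 0 < K) :
    ∃ B, ∀ ω t s a, |penalizedReward f r K φ πφ FF ω t s a| ≤ B := by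
  obtain ⟨R, hR⟩ := Finite.exists_le fun p : Option S × A => |rbar r p.1 p.2|
  obtain ⟨C, hC⟩ := Finite.exists_le fun p : Option S × A => |φ p.1 p.2|
  exact ⟨R + 2 * C, fun ω t s a => (abs_sub _ _).trans
    (add_le_add (hR (s, a)) (abs_penB_le hK (fun s a => hC (s, a)) _ _ t s a))⟩

variable [MeasurableSpace W] [MeasurableSpace Ω] {μ : Measure Ω}

theorem measurable_penB [Finite W] [MeasurableSingletonClass W]
    (hFmeas : ∀ j, Measurable (FF j)) (t : ℕ) (s : Option S) (a : A) :
    Measurable fun ω => penB f K φ πφ (samplePath FF ω)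
      (fun u s' a' k => FF (.inr (u, s', a', k)) ω) t s a := by
  have hψ : ∀ j, Measurable fun ω => φ (habs f s a (FF j ω)) (πφ (habs f s a (FF j ω))) :=
    fun j => (measurable_of_finite fun d => φ (habs f s a d) (πφ (habs f s a d))).comp (hFmeas j)
  exact (hψ _).sub (measurable_const.mul (Finset.measurable_sum _ fun k _ => hψ _))

theorem measurable_penalizedReward [Finite W] [MeasurableSingletonClass W]
    (hFmeas : ∀ j, Measurable (FF j)) (t : ℕ) (s : Option S) (a : A) :
    Measurable fun ω => penalizedReward f r K φ πφ FF ω t s a :=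
  measurable_const.sub (measurable_penB hFmeas t s a)

theorem integral_penB_eq_zero [Finite W] [MeasurableSingletonClass W] [IsProbabilityMeasure μ]
    {νa : Measure (Bool × W)} (hK : 0 < K) (hFmeas : ∀ j, Measurable (FF j))
    (hFdist : ∀ j, μ.map (FF j) = νa) (t : ℕ) (s : Option S) (a : A) :
    ∫ ω, penB f K φ πφ (samplePath FF ω) (fun u s' a' k => FF (.inr (u, s', a', k)) ω) t s a ∂μ
      = 0 := by
  set ψ : Bool × W → ℝ := fun d => φ (habs f s a d) (πφ (habs f s a d))
  have hint : ∀ j, Integrable (fun ω => ψ (FF j ω)) μ := fun j =>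
    (Integrable.of_finite (μ := μ.map (FF j)) (f := ψ)).comp_measurable (hFmeas j)
  have hmean : ∀ j, ∫ ω, ψ (FF j ω) ∂μ = ∫ d, ψ d ∂νa := fun j => by
    rw [← hFdist j,
      integral_map (hFmeas j).aemeasurable (measurable_of_finite ψ).aestronglyMeasurable]
  change ∫ ω, ψ (FF _ ω) - (K : ℝ)⁻¹ * ∑ k : Fin K, ψ (FF _ ω) ∂μ = 0
  rw [integral_sub (hint _) ((integrable_finsetSum _ fun k _ => hint _).const_mul _),
    integral_const_mul, integral_finsetSum _ fun k _ => hint _]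
  simp only [hmean, Finset.sum_const, Finset.card_univ, Fintype.card_fin, nsmul_eq_mul]
  field_simp
  ring

/-- The state-action pair at time `i` is generated by the path disturbances before `i`, the
disturbance and the batch used at time `i` by the remaining coordinates of `FF`. -/
theorem indepFun_traj_sample [MeasurableSpace (Option S)] [Countable (Option S)]
    [MeasurableSingletonClass (Option S)] [MeasurableSpace A] [Countable A]
    [MeasurableSingletonClass A] [Countable W] [MeasurableSingletonClass W]
    (hFmeas : ∀ j, Measurable (FF j)) (hFindep : iIndepFun FF μ)
    (π : Option S → A) (sa : Option S × A) (i : ℕ) :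
    IndepFun (fun ω => traj (habs f) π sa (samplePath FF ω) i)
      (fun ω => (FF (.inl i) ω, fun (b : Option S × A) k => FF (.inr (i, b.1, b.2, k)) ω)) μ := by
  refine hFindep.indepFun_of_measurable_iSup hFmeas (s := Sum.inl '' Set.Iio i)
    disjoint_compl_right ?_ ?_
  · exact measurable_traj _ _ _ fun t ht => measurable_iSup_comap_of_mem FF ⟨t, ht, rfl⟩
  · let m : MeasurableSpace Ω :=
      ⨆ j ∈ (Sum.inl '' Set.Iio i)ᶜ, MeasurableSpace.comap (FF j) inferInstance
    have hFF : ∀ j ∉ Sum.inl '' Set.Iio i, Measurable[m] (FF j) := fun j hj =>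
      measurable_iSup_comap_of_mem FF hj
    exact (hFF _ (by rintro ⟨t, ht, h⟩; simp_all)).prodMk
      (@measurable_pi_lambda _ _ _ m _ _ fun b => @measurable_pi_lambda _ _ _ m _ _ fun k =>
        hFF _ (by rintro ⟨t, ht, h⟩; cases h))

theorem integral_penB_traj_eq_zero [Fintype S] [Fintype A] [Fintype W]
    [MeasurableSingletonClass W] [IsProbabilityMeasure μ] {νa : Measure (Bool × W)}
    (hK : 0 < K) (hFmeas : ∀ j, Measurable (FF j)) (hFindep : iIndepFun FF μ)
    (hFdist : ∀ j, μ.map (FF j) = νa) (π : Option S → A) (sa : Option S × A) (i : ℕ) :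
    ∫ ω, penB f K φ πφ (samplePath FF ω) (fun u s' a' k => FF (.inr (u, s', a', k)) ω) i
      (traj (habs f) π sa (samplePath FF ω) i).1 (traj (habs f) π sa (samplePath FF ω) i).2 ∂μ
      = 0 := by
  classical
  let _ : MeasurableSpace (Option S) := ⊤
  let _ : MeasurableSpace A := ⊤
  let F : Option S × A → (Bool × W) × (Option S × A → Fin K → Bool × W) → ℝ := fun b y =>
    φ (habs f b.1 b.2 y.1) (πφ (habs f b.1 b.2 y.1)) - (K : ℝ)⁻¹ *
      ∑ k, φ (habs f b.1 b.2 (y.2 b k)) (πφ (habs f b.1 b.2 (y.2 b k)))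
  have hT : Measurable fun ω => traj (habs f) π sa (samplePath FF ω) i :=
    measurable_traj _ _ _ fun t _ => hFmeas _
  have hY : Measurable fun ω =>
      (FF (.inl i) ω, fun (b : Option S × A) k => FF (.inr (i, b.1, b.2, k)) ω) :=
    (hFmeas _).prodMk (measurable_pi_lambda _ fun b => measurable_pi_lambda _ fun k => hFmeas _)
  calc _ = ∫ ω, ∫ ω', F (traj (habs f) π sa (samplePath FF ω) i)
        (FF (.inl i) ω', fun b k => FF (.inr (i, b.1, b.2, k)) ω') ∂μ ∂μ :=
        (indepFun_traj_sample hFmeas hFindep π sa i).integral_comp_eq_integral_integral hT hY F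
    _ = ∫ _, (0 : ℝ) ∂μ :=
        integral_congr_ae (ae_of_all _ fun ω => integral_penB_eq_zero hK hFmeas hFdist i _ _)
    _ = 0 := integral_zero _ _

theorem measure_forall_samplePath_fst_eq_true [Fintype W] [MeasurableSingletonClass W]
    {νa : Measure (Bool × W)} (hFmeas : ∀ j, Measurable (FF j)) (hFindep : iIndepFun FF μ)
    (hFdist : ∀ j, μ.map (FF j) = νa) {ν : Measure W} [IsProbabilityMeasure ν] {γ : ℝ}
    (hνa : ∀ x, νa {(true, x)} = ENNReal.ofReal γ * ν {x}) (n : ℕ) :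
    μ {ω | ∀ j < n, (samplePath FF ω j).1 = true} = ENNReal.ofReal γ ^ n := by
  rw [← measure_fst_eq_true hνa]
  exact measure_forall_fst_eq_true (fun j => hFmeas _) (hFindep.precomp Sum.inl_injective)
    (fun j => hFdist _) n

end EmpiricalPenalty

section Bounds

variable {S A W Ω Ω₀ : Type*} [Fintype S] [Fintype A] [Fintype W] [MeasurableSpace W]
  [MeasurableSingletonClass W] [MeasurableSpace Ω] {μ : Measure Ω} {K : ℕ}
  {FF : (ℕ ⊕ (ℕ × Option S × A × Fin K)) → Ω → Bool × W} {f : S → A → W → S}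
  {r : S → A → ℝ} {φ : Option S → A → ℝ} {πφ : Option S → A}

theorem integrable_innerU_absTime [Nonempty A] (hK : 0 < K) (hFmeas : ∀ j, Measurable (FF j))
    (hτ : Integrable (fun ω => (absTime (samplePath FF ω) : ℝ)) μ) (s : Option S) (a : A) :
    Integrable (fun ω => innerU (habs f) (penalizedReward f r K φ πφ FF ω) (samplePath FF ω) 0
      (absTime (samplePath FF ω)) s a) μ := by
  let _ : MeasurableSpace (Option S) := ⊤
  obtain ⟨B, hB⟩ := exists_abs_penalizedReward_le (f := f) (r := r) (φ := φ) (πφ := πφ)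
    (FF := FF) hK
  exact integrable_apply_of_abs_le_mul
    (fun n => measurable_innerU (w := fun t => FF (.inl t)) (measurable_penalizedReward hFmeas)
      (fun t => hFmeas _) n 0 s a)
    (measurable_absTime fun j => hFmeas _) hτ fun n ω => abs_innerU_le _ _ _ (hB ω) n 0 s a

theorem integrable_innerL_absTime (hK : 0 < K) (hFmeas : ∀ j, Measurable (FF j))
    (hτ : Integrable (fun ω => (absTime (samplePath FF ω) : ℝ)) μ) (π : Option S → A)
    (s : Option S) (a : A) :
    Integrable (fun ω => innerL (habs f) π (penalizedReward f r K φ πφ FF ω) (samplePath FF ω)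
      0 (absTime (samplePath FF ω)) s a) μ := by
  let _ : MeasurableSpace (Option S) := ⊤
  obtain ⟨B, hB⟩ := exists_abs_penalizedReward_le (f := f) (r := r) (φ := φ) (πφ := πφ)
    (FF := FF) hK
  exact integrable_apply_of_abs_le_mul
    (fun n => measurable_innerL (w := fun t => FF (.inl t)) π
      (measurable_penalizedReward hFmeas) (fun t => hFmeas _) n 0 s a)
    (measurable_absTime fun j => hFmeas _) hτ fun n ω => abs_innerL_le _ _ _ _ (hB ω) n 0 s a

variable [IsProbabilityMeasure μ]

theorem integrable_penalizedReward_traj (hK : 0 < K) (hFmeas : ∀ j, Measurable (FF j))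
    (π : Option S → A) (sa : Option S × A) (i : ℕ) :
    Integrable (fun ω => penalizedReward f r K φ πφ FF ω i
      (traj (habs f) π sa (samplePath FF ω) i).1
      (traj (habs f) π sa (samplePath FF ω) i).2) μ := by
  let _ : MeasurableSpace (Option S) := ⊤
  let _ : MeasurableSpace A := ⊤
  obtain ⟨B, hB⟩ := exists_abs_penalizedReward_le (f := f) (r := r) (φ := φ) (πφ := πφ)
    (FF := FF) hK
  exact Integrable.of_bound (measurable_apply_of_countable
    (F := fun b ω => penalizedReward f r K φ πφ FF ω i b.1 b.2)
    (fun b => measurable_penalizedReward hFmeas i b.1 b.2)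
    (measurable_traj _ _ _ fun t _ => hFmeas _)).aestronglyMeasurable B
    (ae_of_all _ fun ω => hB _ _ _ _)

theorem summable_integral_norm_penalizedReward_traj (hK : 0 < K)
    (hFmeas : ∀ j, Measurable (FF j)) {γ : ℝ} (hγ0 : 0 ≤ γ) (hγ1 : γ < 1)
    (hsurv : ∀ n, μ {ω | ∀ j < n, (samplePath FF ω j).1 = true} = ENNReal.ofReal γ ^ n)
    (π : Option S → A) (sa : Option S × A) :
    Summable fun i => ∫ ω, ‖penalizedReward f r K φ πφ FF ω i
      (traj (habs f) π sa (samplePath FF ω) i).1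
      (traj (habs f) π sa (samplePath FF ω) i).2‖ ∂μ := by
  obtain ⟨B, hB⟩ := exists_abs_penalizedReward_le (f := f) (r := r) (φ := φ) (πφ := πφ)
    (FF := FF) hK
  set E : ℕ → Set Ω := fun i => {ω | ∀ j < i, (samplePath FF ω j).1 = true}
  have hE : ∀ i, MeasurableSet (E i) := fun i => by
    simp only [E, Set.ofPred_forall]
    exact MeasurableSet.iInter fun j => MeasurableSet.iInter fun _ =>
      (measurable_fst.comp (hFmeas (.inl j))) (measurableSet_singleton true)
  have hle : ∀ i ω, ‖penalizedReward f r K φ πφ FF ω i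
      (traj (habs f) π sa (samplePath FF ω) i).1 (traj (habs f) π sa (samplePath FF ω) i).2‖
      ≤ (E i).indicator (fun _ => B) ω := by
    intro i ω
    by_cases hω : ∀ j < i, (samplePath FF ω j).1 = true
    · rw [Set.indicator_of_mem (show ω ∈ E i from hω)]
      exact hB _ _ _ _
    · push Not at hω
      obtain ⟨j, hj, hfail⟩ := hω
      rw [Set.indicator_of_notMem fun (h : ω ∈ E i) => hfail (h j hj),
        traj_habs_fst_eq_none f π sa ⟨j, hj, by simpa using hfail⟩, penalizedReward_none hK,
        norm_zero]
  refine Summable.of_nonneg_of_le (fun i => integral_nonneg fun ω => norm_nonneg _)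
    (fun i => ?_) ((summable_geometric_of_lt_one hγ0 hγ1).mul_left B)
  calc _ ≤ ∫ ω, (E i).indicator (fun _ => B) ω ∂μ :=
        integral_mono (integrable_penalizedReward_traj hK hFmeas π sa i).norm
          ((integrable_const B).indicator (hE i)) (hle i)
    _ = B * γ ^ i := by
        rw [integral_indicator_const _ (hE i), measureReal_def, hsurv, ENNReal.toReal_pow,
          ENNReal.toReal_ofReal hγ0, smul_eq_mul, mul_comm]

theorem integral_penalizedReward_traj [Nonempty W] [MeasurableSpace Ω₀] {μ₀ : Measure Ω₀}
    [IsProbabilityMeasure μ₀] {νa : Measure (Bool × W)} (hK : 0 < K)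
    (hFmeas : ∀ j, Measurable (FF j)) (hFindep : iIndepFun FF μ)
    (hFdist : ∀ j, μ.map (FF j) = νa) {wseq : ℕ → Ω₀ → W} (hwseqmeas : ∀ t, Measurable (wseq t))
    (hwseqindep : iIndepFun wseq μ₀) {ν : Measure W} (hwseqdist : ∀ t, μ₀.map (wseq t) = ν)
    {γ : ℝ} (hγ : 0 ≤ γ) (hνa : ∀ x, νa {(true, x)} = ENNReal.ofReal γ * ν {x})
    (π : Option S → A) (s : S) (a : A) (i : ℕ) :
    ∫ ω, penalizedReward f r K φ πφ FF ω i (traj (habs f) π (some s, a) (samplePath FF ω) i).1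
        (traj (habs f) π (some s, a) (samplePath FF ω) i).2 ∂μ =
      γ ^ i * ∫ ω, r (traj f (fun s' => π (some s')) (s, a) (fun j => wseq j ω) i).1
        (traj f (fun s' => π (some s')) (s, a) (fun j => wseq j ω) i).2 ∂μ₀ := by
  let _ : MeasurableSpace (Option S) := ⊤
  let _ : MeasurableSpace A := ⊤
  have hrbar : Integrable (fun ω => rbar r (traj (habs f) π (some s, a) (samplePath FF ω) i).1
      (traj (habs f) π (some s, a) (samplePath FF ω) i).2) μ :=
    (Integrable.of_finite (μ := μ.map _) (f := fun b : Option S × A => rbar r b.1 b.2))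
      |>.comp_measurable (measurable_traj _ _ _ fun t _ => hFmeas _)
  have hpen : Integrable (fun ω => penB f K φ πφ (samplePath FF ω)
      (fun u s' a' k => FF (.inr (u, s', a', k)) ω) i
      (traj (habs f) π (some s, a) (samplePath FF ω) i).1
      (traj (habs f) π (some s, a) (samplePath FF ω) i).2) μ :=
    (hrbar.sub (integrable_penalizedReward_traj hK hFmeas π (some s, a) i)).congr
      (ae_of_all _ fun ω => sub_sub_cancel _ _)
  change ∫ ω, rbar r _ _ - penB f K φ πφ _ _ i _ _ ∂μ = _
  rw [integral_sub hrbar hpen, integral_penB_traj_eq_zero hK hFmeas hFindep hFdist, sub_zero]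
  exact integral_rbar_traj_habs (fun j => hFmeas _) (hFindep.precomp Sum.inl_injective)
    (fun j => hFdist _) hwseqmeas hwseqindep hwseqdist hγ hνa f r π s a i

theorem integral_innerL_absTime_eq_Qpol [Nonempty W] [MeasurableSpace Ω₀] {μ₀ : Measure Ω₀}
    [IsProbabilityMeasure μ₀] {νa : Measure (Bool × W)} (hK : 0 < K)
    (hFmeas : ∀ j, Measurable (FF j)) (hFindep : iIndepFun FF μ)
    (hFdist : ∀ j, μ.map (FF j) = νa) {wseq : ℕ → Ω₀ → W} (hwseqmeas : ∀ t, Measurable (wseq t))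
    (hwseqindep : iIndepFun wseq μ₀) {ν : Measure W} [IsProbabilityMeasure ν]
    (hwseqdist : ∀ t, μ₀.map (wseq t) = ν) {γ : ℝ} (hγ0 : 0 ≤ γ) (hγ1 : γ < 1)
    (hνa : ∀ x, νa {(true, x)} = ENNReal.ofReal γ * ν {x}) (π : Option S → A) (s : S) (a : A) :
    ∫ ω, innerL (habs f) π (penalizedReward f r K φ πφ FF ω) (samplePath FF ω) 0
        (absTime (samplePath FF ω)) (some s) a ∂μ =
      Qpol μ₀ wseq γ r f (fun s' => π (some s')) s a := by
  have hsurv := measure_forall_samplePath_fst_eq_true hFmeas hFindep hFdist hνa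
  have hae := ae_exists_fst_eq_false (ENNReal.ofReal_lt_one.2 hγ1) hsurv
  calc _ = ∫ ω, ∑' i, penalizedReward f r K φ πφ FF ω i
          (traj (habs f) π (some s, a) (samplePath FF ω) i).1
          (traj (habs f) π (some s, a) (samplePath FF ω) i).2 ∂μ :=
        integral_congr_ae (hae.mono fun ω hω => innerL_absTime_eq_tsum f π _
          (penalizedReward_none hK ω) (some s, a) hω)
    _ = ∑' i, γ ^ i * ∫ ω, r (traj f (fun s' => π (some s')) (s, a) (fun j => wseq j ω) i).1
          (traj f (fun s' => π (some s')) (s, a) (fun j => wseq j ω) i).2 ∂μ₀ := by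
        rw [← integral_tsum_of_summable_integral_norm
          (integrable_penalizedReward_traj hK hFmeas π _)
          (summable_integral_norm_penalizedReward_traj hK hFmeas hγ0 hγ1 hsurv π _)]
        exact tsum_congr fun i => integral_penalizedReward_traj hK hFmeas hFindep hFdist
          hwseqmeas hwseqindep hwseqdist hγ0 hνa π s a i
    _ = _ := (Qpol_eq_tsum hwseqmeas hγ0 hγ1 r f _ s a).symm

end Bounds

end LBQL

/-- The family `FF` collects the inner sample path (indices `.inl t`) and the batches
(indices `.inr (t, s', a', k)`, one fresh batch for each evaluation of the penalty). -/
theorem statement5_general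
    {S A W Ω Ω₀ : Type*} [Fintype S] [Fintype A] [Fintype W]
    [Nonempty A] [Nonempty W]
    [MeasurableSpace W] [MeasurableSingletonClass W]
    [MeasurableSpace Ω] [MeasurableSpace Ω₀]
    (μ : Measure Ω) [IsProbabilityMeasure μ]
    (μ₀ : Measure Ω₀) [IsProbabilityMeasure μ₀]
    (ν : Measure W) [IsProbabilityMeasure ν]
    (νa : Measure (Bool × W))
    (γ : ℝ) (hγ0 : 0 < γ) (hγ1 : γ < 1)
    (f : S → A → W → S) (r : S → A → ℝ)
    (hνa : ∀ (b : Bool) (x : W),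
      νa {(b, x)} = (if b then ENNReal.ofReal γ else ENNReal.ofReal (1 - γ)) * ν {x})
    -- the original chain, defining `Q*`
    (wseq : ℕ → Ω₀ → W) (hwseqmeas : ∀ t, Measurable (wseq t))
    (hwseqindep : iIndepFun wseq μ₀)
    (hwseqdist : ∀ t, μ₀.map (wseq t) = ν)
    -- sample path and penalty batches, i.i.d. with distribution `νa`
    (K : ℕ) (hK : 0 < K)
    (FF : (ℕ ⊕ (ℕ × Option S × A × Fin K)) → Ω → Bool × W)
    (hFmeas : ∀ j, Measurable (FF j))
    (hFindep : iIndepFun FF μ)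
    (hFdist : ∀ j, μ.map (FF j) = νa)
    -- `φ ∈ Q-cal` and a greedy policy `π_φ` for it
    (φ : Option S → A → ℝ)
    (πφ : Option S → A)
    (s : S) (a : A) :
    ∫ ω, innerL (habs f) πφ
        (fun t s' a' => rbar r s' a' -
          penB f K φ πφ (fun i => FF (.inl i) ω)
            (fun u s'' a'' k => FF (.inr (u, s'', a'', k)) ω) t s' a')
        (fun i => FF (.inl i) ω) 0 (absTime fun i => FF (.inl i) ω) (some s) a ∂μ ≤
      Qopt μ₀ wseq γ r f s a ∧
    Qopt μ₀ wseq γ r f s a ≤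
      ∫ ω, innerU (habs f)
        (fun t s' a' => rbar r s' a' -
          penB f K φ πφ (fun i => FF (.inl i) ω)
            (fun u s'' a'' k => FF (.inr (u, s'', a'', k)) ω) t s' a')
        (fun i => FF (.inl i) ω) 0 (absTime fun i => FF (.inl i) ω) (some s) a ∂μ := by
  have hνa' : ∀ x, νa {(true, x)} = ENNReal.ofReal γ * ν {x} := fun x => by
    simpa using hνa true x
  have hτ := integrable_absTime (fun j => hFmeas (.inl j)) (ENNReal.ofReal_lt_one.2 hγ1)
    (measure_forall_samplePath_fst_eq_true hFmeas hFindep hFdist hνa')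
  have hQ := integral_innerL_absTime_eq_Qpol (f := f) (r := r) (φ := φ) (πφ := πφ) hK hFmeas
    hFindep hFdist hwseqmeas hwseqindep hwseqdist hγ0.le hγ1 hνa'
  have hbdd : BddAbove (Set.range fun π : S → A => Qpol μ₀ wseq γ r f π s a) :=
    (Set.finite_range _).bddAbove
  constructor
  · exact (hQ πφ s a).trans_le (le_ciSup hbdd _)
  · refine ciSup_le fun π => le_of_eq_of_le (hQ (extPolicy π) s a).symm ?_
    exact integral_mono (integrable_innerL_absTime hK hFmeas hτ _ _ _)
      (integrable_innerU_absTime hK hFmeas hτ _ _) fun ω => innerL_le_innerU _ _ _ _ _ _ _ _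

/-- **Proposition 2: validity of the empirical bounds.**
For every bounded `φ` in `Q-cal` and every state-action pair `(s, a)`, the values
`Q-hat^L_0 (s,a)` and `Q-hat^U_0 (s,a)` of the inner DPs computed with the sampled
(empirical) penalties — where the conditional expectation in each penalty is estimated by
a fresh i.i.d. batch of `K` absorbing-chain disturbances — satisfy
`E [Q-hat^L_0 (s,a)] ≤ Q* (s,a) ≤ E [Q-hat^U_0 (s,a)]`.
The family `FF` collects the inner sample path (indices `.inl t`) and the batches
(indices `.inr (t, s', a', k)`, one fresh batch for each evaluation of the penalty),
all i.i.d. with the absorbing-chain disturbance distribution `νa`. -/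
theorem statement5
    {S A W Ω Ω₀ : Type*} [Fintype S] [Fintype A] [Fintype W]
    [Nonempty S] [Nonempty A] [Nonempty W]
    [MeasurableSpace W] [MeasurableSingletonClass W]
    [MeasurableSpace Ω] [MeasurableSpace Ω₀]
    (μ : Measure Ω) [IsProbabilityMeasure μ]
    (μ₀ : Measure Ω₀) [IsProbabilityMeasure μ₀]
    (ν : Measure W) [IsProbabilityMeasure ν]
    (νa : Measure (Bool × W)) [IsProbabilityMeasure νa]
    (γ Rmax : ℝ) (hγ0 : 0 < γ) (hγ1 : γ < 1)
    (f : S → A → W → S) (r : S → A → ℝ) (hr : ∀ s a, |r s a| ≤ Rmax)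
    (hνa : ∀ (b : Bool) (x : W),
      νa {(b, x)} = (if b then ENNReal.ofReal γ else ENNReal.ofReal (1 - γ)) * ν {x})
    -- the original chain, defining `Q*`
    (wseq : ℕ → Ω₀ → W) (hwseqmeas : ∀ t, Measurable (wseq t))
    (hwseqindep : iIndepFun wseq μ₀)
    (hwseqdist : ∀ t, μ₀.map (wseq t) = ν)
    -- sample path and penalty batches, i.i.d. with distribution `νa`
    (K : ℕ) (hK : 0 < K)
    (FF : (ℕ ⊕ (ℕ × Option S × A × Fin K)) → Ω → Bool × W)
    (hFmeas : ∀ j, Measurable (FF j))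
    (hFindep : iIndepFun FF μ)
    (hFdist : ∀ j, μ.map (FF j) = νa)
    -- `φ ∈ Q-cal` and a greedy policy `π_φ` for it
    (φ : Option S → A → ℝ) (C : ℝ) (hφbdd : ∀ s' a', |φ s' a'| ≤ C)
    (hφ0 : ∀ a', φ none a' = 0)
    (πφ : Option S → A) (hgreedy : ∀ s' a', φ s' a' ≤ φ s' (πφ s'))
    (s : S) (a : A) :
    ∫ ω, innerL (habs f) πφ
        (fun t s' a' => rbar r s' a' -
          penB f K φ πφ (fun i => FF (.inl i) ω)
            (fun u s'' a'' k => FF (.inr (u, s'', a'', k)) ω) t s' a')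
        (fun i => FF (.inl i) ω) 0 (absTime fun i => FF (.inl i) ω) (some s) a ∂μ ≤
      Qopt μ₀ wseq γ r f s a ∧
    Qopt μ₀ wseq γ r f s a ≤
      ∫ ω, innerU (habs f)
        (fun t s' a' => rbar r s' a' -
          penB f K φ πφ (fun i => FF (.inl i) ω)
            (fun u s'' a'' k => FF (.inr (u, s'', a'', k)) ω) t s' a')
        (fun i => FF (.inl i) ω) 0 (absTime fun i => FF (.inl i) ω) (some s) a ∂μ :=
  statement5_general μ μ₀ ν νa γ hγ0 hγ1 f r hνa wseq hwseqmeas hwseqindep hwseqdist K hK FF hFmeas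
    hFindep hFdist φ πφ s a
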